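/- For all 1 ≤ i,j ≤ N and all m ≥ 1, the commutator [ι(F^{(0)}_{ij}), tr F(u)ᵐ] is zero in U(𝔤_ℓ)[u]; that is, tr F(u)ᵐ commutes with every element of the degree-zero copy of 𝔤 inside U(𝔤_ℓ). (Intermediate claim in the proof of Proposition 3.1.) -/

import Mathlib

/- Context: 𝔤 finite-dimensional simple over ℂ, B nondegenerate symmetric invariant form,
dual bases Jup = (Jᵃ), Jlo = (J_a), ρ faithful on ℂᴺ, f_{ij} = −∑ₐ (ρ(Jᵃ))_{ij}·J_a;
𝔤_ℓ = 𝔤 ⊗ ℂ[v]/(v^{ℓ+1}) the Takiff algebra, F^{(r)}_{ij} = f_{ij} ⊗ vʳ,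
F(u) the N×N matrix over U(𝔤_ℓ)[u] with entries ∑_{r=0}^ℓ ι(F^{(r)}_{ij})uʳ,
tr F(u)ᵐ = ∑_r θ_m^{(r)} uʳ. -/

open TensorProduct

attribute [local instance 100] LieRing.ofAssociativeRing

/-- The truncated polynomial ring `ℂ[v]/(v^{ℓ+1})`. -/
abbrev TruncPoly (ℓ : ℕ) : Type :=
  Polynomial ℂ ⧸ Ideal.span {(Polynomial.X : Polynomial ℂ) ^ (ℓ + 1)}

/-- The image of `vʳ` in `ℂ[v]/(v^{ℓ+1})`. -/
noncomputable def vpow (ℓ r : ℕ) : TruncPoly ℓ :=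
  Ideal.Quotient.mk _ (Polynomial.X ^ r)

/-- A base-changed Lie algebra is also a Lie algebra over the base field. -/
noncomputable instance instLieAlgebraCBaseChange {g : Type} [LieRing g] [LieAlgebra ℂ g]
    {A : Type} [CommRing A] [Algebra ℂ A] : LieAlgebra ℂ (A ⊗[ℂ] g) where
  lie_smul t x y := by
    rw [← algebraMap_smul A t y, ← algebraMap_smul A t ⁅x, y⁆]
    exact (LieAlgebra.ExtendScalars.instLieAlgebra ℂ A g).lie_smul _ x y

/-- The element `f_{ij} = −∑ₐ (ρ(Jᵃ))_{ij}·J_a ∈ 𝔤`. -/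
noncomputable def fElem {d N : ℕ} {g : Type} [LieRing g] [LieAlgebra ℂ g]
    (ρ : g →ₗ⁅ℂ⁆ Matrix (Fin N) (Fin N) ℂ)
    (Jup Jlo : Module.Basis (Fin d) ℂ g) (i j : Fin N) : g :=
  -(∑ a : Fin d, (ρ (Jup a)) i j • Jlo a)

/-- The element `F^{(r)}_{ij} = f_{ij} ⊗ vʳ` of the Takiff algebra `𝔤_ℓ`. -/
noncomputable def takiffF {d N : ℕ} {g : Type} [LieRing g] [LieAlgebra ℂ g]
    (ρ : g →ₗ⁅ℂ⁆ Matrix (Fin N) (Fin N) ℂ) (Jup Jlo : Module.Basis (Fin d) ℂ g)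
    (ℓ r : ℕ) (i j : Fin N) : TruncPoly ℓ ⊗[ℂ] g :=
  vpow ℓ r ⊗ₜ fElem ρ Jup Jlo i j

/-- The matrix `F(u)` over `U(𝔤_ℓ)[u]` with entries `∑_{r=0}^ℓ ι(F^{(r)}_{ij})·uʳ`. -/
noncomputable def takiffFMat {d N : ℕ} {g : Type} [LieRing g] [LieAlgebra ℂ g]
    (ρ : g →ₗ⁅ℂ⁆ Matrix (Fin N) (Fin N) ℂ) (Jup Jlo : Module.Basis (Fin d) ℂ g) (ℓ : ℕ) :
    Matrix (Fin N) (Fin N)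
      (Polynomial (UniversalEnvelopingAlgebra ℂ (TruncPoly ℓ ⊗[ℂ] g))) :=
  Matrix.of fun i j => ∑ r : Fin (ℓ + 1),
    Polynomial.C (UniversalEnvelopingAlgebra.ι ℂ (takiffF ρ Jup Jlo ℓ (r : ℕ) i j)) *
      Polynomial.X ^ (r : ℕ)

/-!
Put `c = ι(F^{(0)}_{ij})` and `A = ρ(f_{ij})`. Invariance of the Casimir tensor `∑ₐ ρ(Jᵃ) ⊗ J_a`
gives `[x, f_{kl}] = ∑ₚ ρ(x)_{pl} f_{kp} − ∑ₚ ρ(x)_{kp} f_{pl}`; as `F^{(0)}_{ij}` lies in the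
degree-zero copy of `𝔤`, this lifts to `[c, F(u)] = F(u)A − AF(u)` entrywise. So `c·1 + A`
commutes with `F(u)`, hence with `F(u)ᵐ`, and `[c, tr F(u)ᵐ] = tr [F(u)ᵐ, A]`, which vanishes
because the entries of `A` are scalars.
-/

namespace Matrix

variable {n R : Type*} [Fintype n] [Ring R]

theorem trace_lie_map_algebraMap {S : Type*} [CommSemiring S] [Algebra S R]
    (N : Matrix n n R) (A : Matrix n n S) : ⁅N, A.map (algebraMap S R)⁆.trace = 0 := by
  rw [Ring.lie_def, trace_sub, sub_eq_zero]
  simp only [trace, diag, mul_apply, map_apply, Algebra.commutes]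
  exact Finset.sum_comm

variable [DecidableEq n]

theorem lie_scalar_apply (c : R) (N : Matrix n n R) (k l : n) :
    ⁅scalar n c, N⁆ k l = ⁅c, N k l⁆ := by
  simp [Ring.lie_def]

theorem lie_trace (c : R) (N : Matrix n n R) : ⁅c, N.trace⁆ = ⁅scalar n c, N⁆.trace := by
  simp only [trace, diag, lie_sum, lie_scalar_apply]

theorem lie_trace_pow_eq_zero {S : Type*} [CommSemiring S] [Algebra S R] (c : R)
    (M : Matrix n n R) (A : Matrix n n S)
    (h : ∀ k l, ⁅c, M k l⁆ = ∑ p, A p l • M k p - ∑ p, A k p • M p l) (m : ℕ) :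
    ⁅c, (M ^ m).trace⁆ = 0 := by
  set A' := A.map (algebraMap S R)
  have hCM : ⁅scalar n c, M⁆ = ⁅M, A'⁆ := ext fun k l => by
    rw [lie_scalar_apply, h]
    simp only [Ring.lie_def, sub_apply, mul_apply, A', map_apply, Algebra.smul_def,
      Algebra.commutes]
  have hcomm : Commute (scalar n c + A') M := by
    rw [commute_iff_lie_eq, add_lie, hCM, ← lie_skew M A', neg_add_cancel]
  have hCMm : ⁅scalar n c, M ^ m⁆ = ⁅M ^ m, A'⁆ := by
    have := commute_iff_lie_eq.mp (hcomm.pow_right m)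
    rwa [add_lie, add_eq_zero_iff_eq_neg, lie_skew] at this
  rw [lie_trace, hCMm, trace_lie_map_algebraMap]

end Matrix

section DualBases

variable {ι K V : Type*} [Fintype ι] [DecidableEq ι] [CommRing K] [AddCommGroup V] [Module K V]
  {B : V →ₗ[K] V →ₗ[K] K} {Jup Jlo : Module.Basis ι K V}

theorem sum_smul_dualBasis_lo (hdual : ∀ a b, B (Jlo a) (Jup b) = if a = b then 1 else 0)
    (y : V) : ∑ b, B y (Jup b) • Jlo b = y := by
  have hrepr : ∀ b, B y (Jup b) = Jlo.repr y b := by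
    intro b
    conv_lhs => rw [← Jlo.sum_repr y]
    simp [-Module.Basis.sum_repr, map_sum, LinearMap.sum_apply, hdual]
  simp only [hrepr, Jlo.sum_repr]

theorem sum_smul_dualBasis_up (hdual : ∀ a b, B (Jlo a) (Jup b) = if a = b then 1 else 0)
    (y : V) : ∑ a, B (Jlo a) y • Jup a = y := by
  have hrepr : ∀ a, B (Jlo a) y = Jup.repr y a := by
    intro a
    conv_lhs => rw [← Jup.sum_repr y]
    simp [-Module.Basis.sum_repr, map_sum, hdual]
  simp only [hrepr, Jup.sum_repr]

end DualBases

section Casimir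

variable {ι K g : Type*} [Fintype ι] [DecidableEq ι] [CommRing K] [LieRing g] [LieAlgebra K g]
  {B : g →ₗ[K] g →ₗ[K] K} {Jup Jlo : Module.Basis ι K g}

theorem sum_smul_lie_dualBasis (hBinv : ∀ x y z, B ⁅x, y⁆ z = B x ⁅y, z⁆)
    (hdual : ∀ a b, B (Jlo a) (Jup b) = if a = b then 1 else 0) (φ : g →ₗ[K] K) (x : g) :
    ∑ a, φ (Jup a) • ⁅x, Jlo a⁆ = -∑ b, φ ⁅x, Jup b⁆ • Jlo b := by
  have hskew : ∀ a b, B ⁅x, Jlo a⁆ (Jup b) = -B (Jlo a) ⁅x, Jup b⁆ := fun a b => by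
    rw [← lie_skew, map_neg, LinearMap.neg_apply, hBinv]
  have hφ : ∀ w, ∑ a, B (Jlo a) w * φ (Jup a) = φ w := fun w => by
    conv_rhs => rw [← sum_smul_dualBasis_up hdual w]
    simp only [map_sum, map_smul, smul_eq_mul]
  calc ∑ a, φ (Jup a) • ⁅x, Jlo a⁆
      = ∑ a, φ (Jup a) • ∑ b, B ⁅x, Jlo a⁆ (Jup b) • Jlo b := by
        simp only [sum_smul_dualBasis_lo hdual]
    _ = ∑ b, (∑ a, B ⁅x, Jlo a⁆ (Jup b) * φ (Jup a)) • Jlo b := by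
        simp only [Finset.smul_sum, smul_smul, Finset.sum_smul, mul_comm (φ _)]
        exact Finset.sum_comm
    _ = -∑ b, φ ⁅x, Jup b⁆ • Jlo b := by
        simp only [hskew, neg_mul, Finset.sum_neg_distrib, hφ, neg_smul]

end Casimir

theorem lie_fElem {d N : ℕ} {g : Type} [LieRing g] [LieAlgebra ℂ g] {B : g →ₗ[ℂ] g →ₗ[ℂ] ℂ}
    (hBinv : ∀ x y z, B ⁅x, y⁆ z = B x ⁅y, z⁆) {Jup Jlo : Module.Basis (Fin d) ℂ g}
    (hdual : ∀ a b, B (Jlo a) (Jup b) = if a = b then 1 else 0)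
    (ρ : g →ₗ⁅ℂ⁆ Matrix (Fin N) (Fin N) ℂ) (x : g) (k l : Fin N) :
    ⁅x, fElem ρ Jup Jlo k l⁆ =
      ∑ p, ρ x p l • fElem ρ Jup Jlo k p - ∑ p, ρ x k p • fElem ρ Jup Jlo p l := by
  have hcas := sum_smul_lie_dualBasis hBinv hdual
    (Matrix.entryLinearMap ℂ ℂ k l ∘ₗ ρ.toLinearMap) x
  simp only [LinearMap.coe_comp, Function.comp_apply, LieHom.coe_toLinearMap,
    Matrix.entryLinearMap_apply, LieHom.map_lie, Ring.lie_def] at hcas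
  simp only [fElem, lie_neg, lie_sum, lie_smul, hcas, neg_neg, Matrix.sub_apply, Matrix.mul_apply,
    sub_smul, Finset.sum_smul, Finset.sum_sub_distrib, smul_neg, Finset.smul_sum, smul_smul,
    Finset.sum_neg_distrib, neg_sub_neg]
  congr 1
  · exact Finset.sum_comm
  · rw [Finset.sum_comm]
    simp only [mul_comm]

theorem Polynomial.lie_C_monomial {R : Type*} [Ring R] (a b : R) (n : ℕ) :
    ⁅Polynomial.C a, Polynomial.monomial n b⁆ = Polynomial.monomial n ⁅a, b⁆ := by
  simp only [Ring.lie_def, Polynomial.C_mul_monomial, Polynomial.monomial_mul_C, map_sub]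

section Takiff

variable {g : Type} [LieRing g] [LieAlgebra ℂ g]

noncomputable def takiffSeries (ℓ : ℕ) :
    g →ₗ[ℂ] Polynomial (UniversalEnvelopingAlgebra ℂ (TruncPoly ℓ ⊗[ℂ] g)) :=
  ∑ r : Fin (ℓ + 1), (Polynomial.monomial (r : ℕ)).restrictScalars ℂ ∘ₗ
    (UniversalEnvelopingAlgebra.ι ℂ (L := TruncPoly ℓ ⊗[ℂ] g)).toLinearMap ∘ₗ
    TensorProduct.mk ℂ (TruncPoly ℓ) g (vpow ℓ r)

theorem takiffFMat_apply {d N : ℕ} (ρ : g →ₗ⁅ℂ⁆ Matrix (Fin N) (Fin N) ℂ)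
    (Jup Jlo : Module.Basis (Fin d) ℂ g) (ℓ : ℕ) (k l : Fin N) :
    takiffFMat ρ Jup Jlo ℓ k l = takiffSeries ℓ (fElem ρ Jup Jlo k l) := by
  simp [takiffFMat, takiffSeries, takiffF, Polynomial.C_mul_X_pow_eq_monomial]

theorem lie_C_ι_one_tmul_takiffSeries (ℓ : ℕ) (x y : g) :
    ⁅Polynomial.C (UniversalEnvelopingAlgebra.ι ℂ ((1 : TruncPoly ℓ) ⊗ₜ[ℂ] x)), takiffSeries ℓ y⁆ =
      takiffSeries ℓ ⁅x, y⁆ := by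
  simp only [takiffSeries, LinearMap.sum_apply, LinearMap.coe_comp,
    Function.comp_apply, LinearMap.coe_restrictScalars, LieHom.coe_toLinearMap, mk_apply, lie_sum,
    Polynomial.lie_C_monomial, ← LieHom.map_lie, LieAlgebra.ExtendScalars.bracket_tmul, one_mul]

end Takiff

theorem lie_C_ι_takiffF_zero_takiffFMat_apply {d N : ℕ} {g : Type} [LieRing g] [LieAlgebra ℂ g]
    {B : g →ₗ[ℂ] g →ₗ[ℂ] ℂ} (hBinv : ∀ x y z, B ⁅x, y⁆ z = B x ⁅y, z⁆)
    {Jup Jlo : Module.Basis (Fin d) ℂ g} (hdual : ∀ a b, B (Jlo a) (Jup b) = if a = b then 1 else 0)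
    (ρ : g →ₗ⁅ℂ⁆ Matrix (Fin N) (Fin N) ℂ) (ℓ : ℕ) (i j k l : Fin N) :
    ⁅Polynomial.C (UniversalEnvelopingAlgebra.ι ℂ (takiffF ρ Jup Jlo ℓ 0 i j)),
        takiffFMat ρ Jup Jlo ℓ k l⁆ =
      ∑ p, ρ (fElem ρ Jup Jlo i j) p l • takiffFMat ρ Jup Jlo ℓ k p -
        ∑ p, ρ (fElem ρ Jup Jlo i j) k p • takiffFMat ρ Jup Jlo ℓ p l := by
  have hF0 : takiffF ρ Jup Jlo ℓ 0 i j = (1 : TruncPoly ℓ) ⊗ₜ[ℂ] fElem ρ Jup Jlo i j := by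
    simp [takiffF, vpow]
  rw [hF0, takiffFMat_apply, lie_C_ι_one_tmul_takiffSeries, lie_fElem hBinv hdual]
  simp only [map_sub, map_sum, map_smul, takiffFMat_apply]

theorem takiff_commutator_degree_zero_general
    {d N : ℕ} {g : Type} [LieRing g] [LieAlgebra ℂ g]
    (B : g →ₗ[ℂ] g →ₗ[ℂ] ℂ)
    (hBinv : ∀ x y z, B ⁅x, y⁆ z = B x ⁅y, z⁆)
    (Jup Jlo : Module.Basis (Fin d) ℂ g)
    (hdual : ∀ a b, B (Jlo a) (Jup b) = if a = b then 1 else 0)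
    (ρ : g →ₗ⁅ℂ⁆ Matrix (Fin N) (Fin N) ℂ)
    (ℓ : ℕ)
    (i j : Fin N) (m : ℕ) :
    ⁅(Polynomial.C (UniversalEnvelopingAlgebra.ι ℂ (takiffF ρ Jup Jlo ℓ 0 i j)) :
        Polynomial (UniversalEnvelopingAlgebra ℂ (TruncPoly ℓ ⊗[ℂ] g))),
      (((takiffFMat ρ Jup Jlo ℓ) ^ m).trace)⁆ = 0 :=
  Matrix.lie_trace_pow_eq_zero _ _ _ (lie_C_ι_takiffF_zero_takiffFMat_apply hBinv hdual ρ ℓ i j) m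

/-- for `m ≥ 1`, the commutator `[ι(F^{(0)}_{ij}), tr F(u)ᵐ]` vanishes in
`U(𝔤_ℓ)[u]`. -/
theorem takiff_commutator_degree_zero
    {d N : ℕ} {g : Type} [LieRing g] [LieAlgebra ℂ g]
    [FiniteDimensional ℂ g] [LieAlgebra.IsSimple ℂ g]
    (B : g →ₗ[ℂ] g →ₗ[ℂ] ℂ)
    (hBsymm : ∀ x y, B x y = B y x)
    (hBinv : ∀ x y z, B ⁅x, y⁆ z = B x ⁅y, z⁆)
    (hBnondeg : ∀ x, (∀ y, B x y = 0) → x = 0)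
    (Jup Jlo : Module.Basis (Fin d) ℂ g)
    (hdual : ∀ a b, B (Jlo a) (Jup b) = if a = b then 1 else 0)
    (ρ : g →ₗ⁅ℂ⁆ Matrix (Fin N) (Fin N) ℂ)
    (hρ : Function.Injective ρ)
    (ℓ : ℕ) (hℓ : 1 ≤ ℓ)
    (i j : Fin N) (m : ℕ) (hm : 1 ≤ m) :
    ⁅(Polynomial.C (UniversalEnvelopingAlgebra.ι ℂ (takiffF ρ Jup Jlo ℓ 0 i j)) :
        Polynomial (UniversalEnvelopingAlgebra ℂ (TruncPoly ℓ ⊗[ℂ] g))),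
      (((takiffFMat ρ Jup Jlo ℓ) ^ m).trace)⁆ = 0 :=
  takiff_commutator_degree_zero_general B hBinv Jup Jlo hdual ρ ℓ i j m
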